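/- arXiv:1507.07041 — 3 statements merged into one kernel-verified Lean document; each statement's English description precedes it below -/
import Mathlib

section
/- In the Hopf algebra O(SL_q(2)), let χ: O(SL_q(2)) → k be the unique algebra homomorphism with χ(a) = q⁻¹, χ(b) = χ(c) = 0, χ(d) = q, and let ϑ: O(SL_q(2)) → O(SL_q(2)) be the unique algebra automorphism with ϑ(a) = q²a, ϑ(b) = b, ϑ(c) = c, ϑ(d) = q⁻²d (both exist). Then for every x ∈ O(SL_q(2)) one has χ(S(x₍₁₎)) · x₍₂₎ · χ(S(x₍₃₎)) = ϑ(x). (Equivalently, ϑ(x) = K⁻¹ ▷ x ◁ K⁻¹ for any Hopf pairing of U_q(sl₂) with O(SL_q(2)) taking the value χ on K.) -/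
/-!
Since `k` is commutative and `S` is an anti-homomorphism, `χ ∘ S` is again a character; on the
generators it takes the values `q, 0, 0, q⁻¹`. For characters `φ, ψ` the map
`x ↦ φ(x₍₁₎) x₍₂₎ ψ(x₍₃₎)` is an algebra endomorphism, and on the entries of a matrix
corepresentation `u` (here `u = (a b; c d)`) on which `φ, ψ` are diagonal it acts by
`u i j ↦ φ(u i i) ψ(u j j) u i j`. So both sides of the identity are algebra maps, and they agree
on `a, b, c, d`.
-/

open TensorProduct Coalgebra HopfAlgebra

namespace AlgHom

variable {R A B : Type*} [CommSemiring R] [Semiring A] [HopfAlgebra R A] [CommSemiring B]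
  [Algebra R B]

def compAntipode (χ : A →ₐ[R] B) : A →ₐ[R] B :=
  .ofLinearMap (χ.toLinearMap ∘ₗ antipode R) (by simp)
    fun x y ↦ by simp [antipode_mul_antidistrib, mul_comm]

@[simp] lemma compAntipode_apply (χ : A →ₐ[R] B) (x : A) :
    χ.compAntipode x = χ (antipode R x) := rfl

lemma toLinearMap_compAntipode (χ : A →ₐ[R] B) :
    χ.compAntipode.toLinearMap = χ.toLinearMap ∘ₗ antipode R := rfl

end AlgHom

section Bicoregular

variable {R A : Type*} [CommSemiring R] [Semiring A] [Bialgebra R A]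

/-- `φ ▷ x ◁ ψ = φ(x₍₁₎) x₍₂₎ ψ(x₍₃₎)`, built from algebra maps so that it is one. -/
noncomputable def bicoregular (φ ψ : A →ₐ[R] R) : A →ₐ[R] A :=
  (Algebra.TensorProduct.lid R A).toAlgHom.comp <|
    (Algebra.TensorProduct.rid R R (R ⊗[R] A)).toAlgHom.comp <|
      (Algebra.TensorProduct.map (Algebra.TensorProduct.map φ (.id R A)) ψ).comp <|
        (Algebra.TensorProduct.map (Bialgebra.comulAlgHom R A) (.id R A)).comp
          (Bialgebra.comulAlgHom R A)

lemma toLinearMap_bicoregular (φ ψ : A →ₐ[R] R) :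
    (bicoregular φ ψ).toLinearMap =
      (TensorProduct.lid R A).toLinearMap ∘ₗ (TensorProduct.rid R (R ⊗[R] A)).toLinearMap ∘ₗ
        TensorProduct.map (TensorProduct.map φ.toLinearMap LinearMap.id) ψ.toLinearMap ∘ₗ
          LinearMap.rTensor A (comul (R := R)) ∘ₗ comul :=
  rfl

variable {n : Type*} [Fintype n]

lemma bicoregular_apply_of_comul_eq_sum (φ ψ : A →ₐ[R] R) (u : Matrix n n A)
    (hu : ∀ i j, comul (R := R) (u i j) = ∑ l, u i l ⊗ₜ u l j) (i j : n) :
    bicoregular φ ψ (u i j) = ∑ l, ∑ m, (φ (u i l) * ψ (u m j)) • u l m := by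
  rw [← AlgHom.toLinearMap_apply, toLinearMap_bicoregular]
  simp only [LinearMap.coe_comp, LinearEquiv.coe_coe, Function.comp_apply, hu, map_sum,
    LinearMap.rTensor_tmul, sum_tmul, TensorProduct.map_tmul, AlgHom.toLinearMap_apply,
    LinearMap.id_coe, id_eq, TensorProduct.rid_tmul]
  rw [Finset.sum_comm]
  simp only [map_smul, TensorProduct.lid_tmul, smul_smul, mul_comm]

lemma bicoregular_apply_of_comul_eq_sum_of_isDiag (φ ψ : A →ₐ[R] R) (u : Matrix n n A)
    (hu : ∀ i j, comul (R := R) (u i j) = ∑ l, u i l ⊗ₜ u l j)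
    (hφ : (u.map φ).IsDiag) (hψ : (u.map ψ).IsDiag) (i j : n) :
    bicoregular φ ψ (u i j) = (φ (u i i) * ψ (u j j)) • u i j := by
  rw [bicoregular_apply_of_comul_eq_sum φ ψ u hu, Finset.sum_eq_single i, Finset.sum_eq_single j]
  · intro m _ hm
    simp [show ψ (u m j) = 0 from hψ hm]
  · simp
  · intro l _ hl
    simp [show φ (u i l) = 0 from hφ hl.symm]
  · simp

end Bicoregular

theorem stmt4_haar_modular_automorphism_eq_Kinv_bicoregular_general
    (k : Type*) [Field k] (q : k) (hq : q ≠ 0)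
    (O : Type*) [Ring O] [HopfAlgebra k O]
    (a b c d : O)
    -- coalgebra structure on the generators
    (hΔa : comul (R := k) a = a ⊗ₜ[k] a + b ⊗ₜ[k] c)
    (hΔb : comul (R := k) b = a ⊗ₜ[k] b + b ⊗ₜ[k] d)
    (hΔc : comul (R := k) c = c ⊗ₜ[k] a + d ⊗ₜ[k] c)
    (hΔd : comul (R := k) d = c ⊗ₜ[k] b + d ⊗ₜ[k] d)
    (hSa : antipode (R := k) a = d) (hSb : antipode (R := k) b = -(q⁻¹ • b))
    (hSc : antipode (R := k) c = -(q • c)) (hSd : antipode (R := k) d = a)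
    -- `a, b, c, d` generate `O(SL_q(2))` as an algebra
    (hgen : Algebra.adjoin k ({a, b, c, d} : Set O) = ⊤)
    -- the character `χ` with `χ(a)=q⁻¹, χ(b)=χ(c)=0, χ(d)=q`
    (χ : O →ₐ[k] k)
    (hχa : χ a = q⁻¹) (hχb : χ b = 0) (hχc : χ c = 0) (hχd : χ d = q)
    -- the algebra automorphism `ϑ` with `ϑ(a)=q²a, ϑ(b)=b, ϑ(c)=c, ϑ(d)=q⁻²d`
    (ϑ : O ≃ₐ[k] O)
    (hϑa : ϑ a = (q ^ 2) • a) (hϑb : ϑ b = b) (hϑc : ϑ c = c)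
    (hϑd : ϑ d = (q ^ 2)⁻¹ • d) :
    -- uniqueness of `χ` and `ϑ` with these values
    (∀ χ' : O →ₐ[k] k, χ' a = q⁻¹ → χ' b = 0 → χ' c = 0 → χ' d = q → χ' = χ) ∧
    (∀ ϑ' : O ≃ₐ[k] O, ϑ' a = (q ^ 2) • a → ϑ' b = b → ϑ' c = c →
      ϑ' d = (q ^ 2)⁻¹ • d → ϑ' = ϑ) ∧
    -- the identity `χ(S(x₍₁₎)) • x₍₂₎ • χ(S(x₍₃₎)) = ϑ(x)`
    (∀ x : O,
      ((TensorProduct.lid k O).toLinearMap ∘ₗ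
        (TensorProduct.rid k (k ⊗[k] O)).toLinearMap ∘ₗ
        (TensorProduct.map
          (TensorProduct.map (χ.toLinearMap ∘ₗ antipode (R := k)) LinearMap.id)
          (χ.toLinearMap ∘ₗ antipode (R := k))) ∘ₗ
        (LinearMap.rTensor O (comul (R := k))) ∘ₗ comul) x
      = ϑ x) := by
  refine ⟨fun χ' ha hb hc hd ↦ ?_, fun ϑ' ha hb hc hd ↦ ?_, fun x ↦ ?_⟩
  · exact AlgHom.ext_of_adjoin_eq_top hgen <| by
      simp [Set.EqOn, ha, hb, hc, hd, hχa, hχb, hχc, hχd]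
  · exact AlgEquiv.coe_toAlgHom_injective <| AlgHom.ext_of_adjoin_eq_top hgen <| by
      simp [Set.EqOn, ha, hb, hc, hd, hϑa, hϑb, hϑc, hϑd]
  set u : Matrix (Fin 2) (Fin 2) O := !![a, b; c, d]
  have hu : ∀ i j, comul (R := k) (u i j) = ∑ l, u i l ⊗ₜ u l j := by
    intro i j
    fin_cases i <;> fin_cases j <;> simp [u, Fin.sum_univ_two, hΔa, hΔb, hΔc, hΔd]
  have hdiag : (u.map χ.compAntipode).IsDiag := by
    intro i j hij
    fin_cases i <;> fin_cases j <;> simp_all [u]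
  have hbico : bicoregular χ.compAntipode χ.compAntipode = ϑ.toAlgHom := by
    have h := bicoregular_apply_of_comul_eq_sum_of_isDiag _ _ u hu hdiag hdiag
    refine AlgHom.ext_of_adjoin_eq_top hgen ?_
    simp only [Set.EqOn, Set.forall_mem_insert, Set.mem_singleton_iff, forall_eq]
    refine ⟨?_, ?_, ?_, ?_⟩
    · simpa [u, hSa, hχd, hϑa, sq] using h 0 0
    · simpa [u, hSa, hSd, hχa, hχd, hϑb, hq] using h 0 1
    · simpa [u, hSa, hSd, hχa, hχd, hϑc, hq] using h 1 0
    · simpa [u, hSd, hχa, hϑd, sq] using h 1 1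
  rw [← χ.toLinearMap_compAntipode, ← toLinearMap_bicoregular, AlgHom.toLinearMap_apply, hbico]
  rfl

theorem stmt4_haar_modular_automorphism_eq_Kinv_bicoregular
    (k : Type*) [Field k] [CharZero k] (q : k) (hq : q ≠ 0) (hq2 : q ^ 2 ≠ 1)
    (O : Type*) [Ring O] [HopfAlgebra k O]
    (a b c d : O)
    -- relations of `O(SL_q(2))`
    (hab : a * b = q • (b * a)) (hac : a * c = q • (c * a))
    (hbc : b * c = c * b) (hbd : b * d = q • (d * b)) (hcd : c * d = q • (d * c))
    (had : a * d - d * a = (q - q⁻¹) • (b * c)) (hdet : a * d - q • (b * c) = 1)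
    -- coalgebra structure on the generators
    (hΔa : comul (R := k) a = a ⊗ₜ[k] a + b ⊗ₜ[k] c)
    (hΔb : comul (R := k) b = a ⊗ₜ[k] b + b ⊗ₜ[k] d)
    (hΔc : comul (R := k) c = c ⊗ₜ[k] a + d ⊗ₜ[k] c)
    (hΔd : comul (R := k) d = c ⊗ₜ[k] b + d ⊗ₜ[k] d)
    (hεa : counit (R := k) a = 1) (hεb : counit (R := k) b = 0)
    (hεc : counit (R := k) c = 0) (hεd : counit (R := k) d = 1)
    (hSa : antipode (R := k) a = d) (hSb : antipode (R := k) b = -(q⁻¹ • b))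
    (hSc : antipode (R := k) c = -(q • c)) (hSd : antipode (R := k) d = a)
    -- `a, b, c, d` generate `O(SL_q(2))` as an algebra
    (hgen : Algebra.adjoin k ({a, b, c, d} : Set O) = ⊤)
    -- the character `χ` with `χ(a)=q⁻¹, χ(b)=χ(c)=0, χ(d)=q`
    (χ : O →ₐ[k] k)
    (hχa : χ a = q⁻¹) (hχb : χ b = 0) (hχc : χ c = 0) (hχd : χ d = q)
    -- the algebra automorphism `ϑ` with `ϑ(a)=q²a, ϑ(b)=b, ϑ(c)=c, ϑ(d)=q⁻²d`
    (ϑ : O ≃ₐ[k] O)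
    (hϑa : ϑ a = (q ^ 2) • a) (hϑb : ϑ b = b) (hϑc : ϑ c = c)
    (hϑd : ϑ d = (q ^ 2)⁻¹ • d) :
    -- uniqueness of `χ` and `ϑ` with these values
    (∀ χ' : O →ₐ[k] k, χ' a = q⁻¹ → χ' b = 0 → χ' c = 0 → χ' d = q → χ' = χ) ∧
    (∀ ϑ' : O ≃ₐ[k] O, ϑ' a = (q ^ 2) • a → ϑ' b = b → ϑ' c = c →
      ϑ' d = (q ^ 2)⁻¹ • d → ϑ' = ϑ) ∧
    -- the identity `χ(S(x₍₁₎)) • x₍₂₎ • χ(S(x₍₃₎)) = ϑ(x)`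
    (∀ x : O,
      ((TensorProduct.lid k O).toLinearMap ∘ₗ
        (TensorProduct.rid k (k ⊗[k] O)).toLinearMap ∘ₗ
        (TensorProduct.map
          (TensorProduct.map (χ.toLinearMap ∘ₗ antipode (R := k)) LinearMap.id)
          (χ.toLinearMap ∘ₗ antipode (R := k))) ∘ₗ
        (LinearMap.rTensor O (comul (R := k))) ∘ₗ comul) x
      = ϑ x) :=
  stmt4_haar_modular_automorphism_eq_Kinv_bicoregular_general k q hq O a b c d hΔa hΔb hΔc hΔd hSa
    hSb hSc hSd hgen χ hχa hχb hχc hχd ϑ hϑa hϑb hϑc hϑd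
end

section
/- Let H = U_q(su₂), σ := K⁻² ∈ H, and let 𝒦 ⊆ H be the Hopf subalgebra generated by K² and K⁻². Let M^p denote the quotient of H^⊗(p+1) by the subspace spanned by all h₍₁₎h⁰⊗…⊗h₍ₚ₊₁₎hᵖ − ε(h)·h⁰⊗…⊗hᵖ (h ∈ H), i.e. M^p = {}^{σ⁻¹}k ⊗_H H^⊗(p+1) for the trivial right H-action on k; write [h⁰⊗…⊗hᵖ] for classes. Define two right operations on M^p: the diagonal 𝒦-action [h⁰⊗…⊗hᵖ]·u := [h⁰u₍₁₎⊗…⊗hᵖu₍ₚ₊₁₎] and the last-factor operation [h⁰⊗…⊗hᵖ]◁u := [h⁰⊗…⊗hᵖu]. Define ∂ᵢ[h⁰⊗…⊗hᵖ] := [h⁰⊗…⊗Δ(hⁱ)⊗…⊗hᵖ] for 0 ≤ i ≤ p, ∂_{p+1}[h⁰⊗…⊗hᵖ] := [h⁰₍₂₎⊗h¹⊗…⊗hᵖ⊗σ⁻¹h⁰₍₁₎], and τ_p[h⁰⊗…⊗hᵖ] := [h¹⊗…⊗hᵖ⊗σ⁻¹h⁰]. Then the element F := [1⊗KF⊗EK³]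 − [1⊗EK⊗K³F] − (q³−q)⁻¹[1⊗1⊗K⁴] of M² satisfies: (i) F·K^{2m} = F for all m ∈ ℤ (𝒦-equivariance); (ii) ∂₀F − ∂₁F + ∂₂F − (∂₃F)◁K² = 0; and (iii) (τ₂F)◁K² = F. Hence F defines an equivariant cyclic 2-cocycle in C²_𝒦(U_q(su₂), {}^σk, {}^{σ⁻¹}k). -/
/-!
STATEMENT 9: For `H = U_q(su₂)`, `σ = K⁻²`, and the quotient
`M^p = {}^{σ⁻¹}k ⊗_H H^⊗(p+1)` of `H^⊗(p+1)` by the span of all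
`h₍₁₎h⁰ ⊗ … ⊗ h₍ₚ₊₁₎hᵖ − ε(h)·h⁰ ⊗ … ⊗ hᵖ`, the element
`F = [1⊗KF⊗EK³] − [1⊗EK⊗K³F] − (q³−q)⁻¹[1⊗1⊗K⁴]` of `M²` is a `𝒦`-equivariant
cyclic 2-cocycle: (i) `F·K^{2m} = F` for all `m ∈ ℤ`;
(ii) `∂₀F − ∂₁F + ∂₂F − (∂₃F)◁K² = 0`; (iii) `(τ₂F)◁K² = F`.
All of this is expressed on the level of representatives, modulo the relation
subspaces `N₃ ⊆ H^⊗3` and `N₄ ⊆ H^⊗4` defining the quotients.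
-/

open TensorProduct Coalgebra HopfAlgebra

section
variable {k H : Type*} [CommRing k] [Ring H] [Bialgebra k H]

/-- Two-fold comultiplication `h ↦ h₍₁₎ ⊗ h₍₂₎ ⊗ h₍₃₎`. -/
noncomputable def comul2 : H →ₗ[k] (H ⊗[k] H) ⊗[k] H :=
  (LinearMap.rTensor H (comul (R := k))) ∘ₗ comul

/-- Three-fold comultiplication `h ↦ h₍₁₎ ⊗ h₍₂₎ ⊗ h₍₃₎ ⊗ h₍₄₎`. -/
noncomputable def comul3 : H →ₗ[k] ((H ⊗[k] H) ⊗[k] H) ⊗[k] H :=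
  (LinearMap.rTensor H (comul2 (k := k))) ∘ₗ comul

/-- The relation subspace: the span of all `Δⁿ(h)·x − ε(h)·x`, so that the quotient is
`{}^{σ⁻¹}k ⊗_H H^⊗(n+1)` for the trivial right `H`-action on `k`. -/
noncomputable def relSub3 : Submodule k ((H ⊗[k] H) ⊗[k] H) :=
  Submodule.span k
    {y | ∃ (h : H) (x : (H ⊗[k] H) ⊗[k] H), y = comul2 (k := k) h * x - counit (R := k) h • x}

@[reducible] noncomputable def relSub4 : Submodule k (((H ⊗[k] H) ⊗[k] H) ⊗[k] H) :=
  Submodule.span k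
    {y | ∃ (h : H) (x : ((H ⊗[k] H) ⊗[k] H) ⊗[k] H),
      y = comul3 (k := k) h * x - counit (R := k) h • x}

/-- `∂₀ = Δ ⊗ id ⊗ id` on representatives. -/
noncomputable def face0 : (H ⊗[k] H) ⊗[k] H →ₗ[k] ((H ⊗[k] H) ⊗[k] H) ⊗[k] H :=
  LinearMap.rTensor H (LinearMap.rTensor H (comul (R := k)))

/-- `∂₁ = id ⊗ Δ ⊗ id` on representatives. -/
noncomputable def face1 : (H ⊗[k] H) ⊗[k] H →ₗ[k] ((H ⊗[k] H) ⊗[k] H) ⊗[k] H :=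
  LinearMap.rTensor H
    ((TensorProduct.assoc k H H H).symm.toLinearMap ∘ₗ LinearMap.lTensor H (comul (R := k)))

/-- `∂₂ = id ⊗ id ⊗ Δ` on representatives. -/
noncomputable def face2 : (H ⊗[k] H) ⊗[k] H →ₗ[k] ((H ⊗[k] H) ⊗[k] H) ⊗[k] H :=
  (TensorProduct.assoc k (H ⊗[k] H) H H).symm.toLinearMap ∘ₗ
    LinearMap.lTensor (H ⊗[k] H) (comul (R := k))

/-- `∂₃([h⁰⊗h¹⊗h²]) = [h⁰₍₂₎⊗h¹⊗h²⊗(σ⁻¹h⁰₍₁₎)]` on representatives; `σinv` is `σ⁻¹ = K²`. -/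
noncomputable def face3 (σinv : H) :
    (H ⊗[k] H) ⊗[k] H →ₗ[k] ((H ⊗[k] H) ⊗[k] H) ⊗[k] H :=
  (LinearMap.lTensor ((H ⊗[k] H) ⊗[k] H) (LinearMap.mulLeft k σinv)) ∘ₗ
    (TensorProduct.comm k H ((H ⊗[k] H) ⊗[k] H)).toLinearMap ∘ₗ
    (LinearMap.lTensor H (TensorProduct.assoc k H H H).symm.toLinearMap) ∘ₗ
    (TensorProduct.assoc k H H (H ⊗[k] H)).toLinearMap ∘ₗ
    (TensorProduct.assoc k (H ⊗[k] H) H H).toLinearMap ∘ₗ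
    LinearMap.rTensor H (LinearMap.rTensor H (comul (R := k)))

/-- `τ₂([h⁰⊗h¹⊗h²]) = [h¹⊗h²⊗(σ⁻¹h⁰)]` on representatives; `σinv` is `σ⁻¹ = K²`. -/
noncomputable def cyc2 (σinv : H) :
    (H ⊗[k] H) ⊗[k] H →ₗ[k] (H ⊗[k] H) ⊗[k] H :=
  (LinearMap.lTensor (H ⊗[k] H) (LinearMap.mulLeft k σinv)) ∘ₗ
    (TensorProduct.comm k H (H ⊗[k] H)).toLinearMap ∘ₗ
    (TensorProduct.assoc k H H H).toLinearMap

end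

/-!
Write `F = [1⊗a⊗bg] − [1⊗b⊗ga] − w[1⊗1⊗g²]` with `g = K²` group-like and `a = KF`, `b = EK`
twisted primitive: `Δa = a⊗g + 1⊗a`, `Δb = b⊗g + 1⊗b`. Conjugation by `K^{±2}` scales `a` and `b`
by inverse scalars, so `F` commutes with the group-like element `Δ²(K^{±2m})`, which acts on the
quotient by its counit `1`. The alternating sum of the cofaces kills each of the three terms
already in `H^⊗4`, for any twisted primitives `a`, `b`. Finally `(τ₂F)◁g − F` is a combination of
the generators `Δ²(a)·[1⊗b⊗g] − ε(a)[1⊗b⊗g]` and `Δ²(b)·[1⊗a⊗g] − ε(b)[1⊗a⊗g]` of the relation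
subspace, once `q⁻²ab − ba = w(1 − g²)`; this is the relation `EF − FE = (K² − K⁻²)/(q − q⁻¹)`
for `w = (q³ − q)⁻¹`.
-/

section SkewCommute

variable {k H : Type*} [CommRing k] [Ring H] [Algebra k H]

def SkewCommute (c : k) (g x : H) : Prop := g * x = c • (x * g)

theorem Commute.skewCommute {g x : H} (h : Commute g x) : SkewCommute (1 : k) g x := by
  rw [SkewCommute, one_smul]; exact h.eq

theorem SkewCommute.mul_right {c d : k} {g x y : H} (hx : SkewCommute c g x)
    (hy : SkewCommute d g y) : SkewCommute (c * d) g (x * y) := by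
  rw [SkewCommute] at *
  rw [← mul_assoc, hx, smul_mul_assoc, mul_assoc, hy, mul_smul_comm, smul_smul, mul_assoc]

theorem SkewCommute.mul_left {c d : k} {g h x : H} (hg : SkewCommute c g x)
    (hh : SkewCommute d h x) : SkewCommute (c * d) (g * h) x := by
  rw [SkewCommute] at *
  rw [mul_assoc, hh, mul_smul_comm, ← mul_assoc, hg, smul_mul_assoc, smul_smul, mul_assoc,
    mul_comm d]

theorem SkewCommute.of_mul_eq_one {c c' : k} {g g' x : H} (h : SkewCommute c g x)
    (hgg' : g * g' = 1) (hg'g : g' * g = 1) (hcc' : c * c' = 1) : SkewCommute c' g' x := by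
  rw [SkewCommute] at *
  have hxg : x * g = c' • (g * x) := by rw [h, smul_smul, mul_comm, hcc', one_smul]
  calc g' * x = g' * (x * g) * g' := by rw [mul_assoc, mul_assoc, hgg', mul_one]
    _ = c' • (x * g') := by
      rw [hxg, mul_smul_comm, smul_mul_assoc, ← mul_assoc, hg'g, one_mul]

end SkewCommute

section Bialgebra

variable {k H : Type*} [CommRing k] [Ring H] [Bialgebra k H]

theorem comul2_mul_sub_counit_smul_mem_relSub3 (h : H) (x : (H ⊗[k] H) ⊗[k] H) :
    comul2 (k := k) h * x - counit (R := k) h • x ∈ relSub3 (k := k) (H := H) :=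
  Submodule.subset_span ⟨h, x, rfl⟩

theorem comul2_eq_of_isGroupLikeElem {g : H} (hg : IsGroupLikeElem k g) :
    comul2 (k := k) g = (g ⊗ₜ[k] g) ⊗ₜ[k] g := by
  simp [comul2, hg.comul_eq_tmul_self]

theorem comul2_eq_of_comul_eq {g a : H} (ha : comul (R := k) a = a ⊗ₜ g + 1 ⊗ₜ a) :
    comul2 (k := k) a = (a ⊗ₜ[k] g) ⊗ₜ[k] g + (1 ⊗ₜ[k] a) ⊗ₜ[k] g + (1 ⊗ₜ[k] 1) ⊗ₜ[k] a := by
  simp [comul2, ha, Algebra.TensorProduct.one_def, add_tmul]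

theorem comul_mul_eq_of_isGroupLikeElem_left {g x u v : H} (hg : IsGroupLikeElem k g)
    (hx : comul (R := k) x = x ⊗ₜ u + v ⊗ₜ x) :
    comul (R := k) (g * x) = (g * x) ⊗ₜ (g * u) + (g * v) ⊗ₜ (g * x) := by
  simp [hg.comul_eq_tmul_self, hx, mul_add]

theorem comul_mul_eq_of_isGroupLikeElem_right {g x u v : H} (hg : IsGroupLikeElem k g)
    (hx : comul (R := k) x = x ⊗ₜ u + v ⊗ₜ x) :
    comul (R := k) (x * g) = (x * g) ⊗ₜ (u * g) + (v * g) ⊗ₜ (x * g) := by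
  simp [hg.comul_eq_tmul_self, hx, add_mul]

theorem counit_eq_zero_of_comul_eq {g a : H} (hg : IsGroupLikeElem k g)
    (ha : comul (R := k) a = a ⊗ₜ g + 1 ⊗ₜ a) : counit (R := k) a = 0 := by
  have h := Coalgebra.rTensor_counit_comul (R := k) a
  rw [ha, map_add, LinearMap.rTensor_tmul, LinearMap.rTensor_tmul, Bialgebra.counit_one,
    add_eq_right] at h
  have h' := congrArg (counit (R := k) ∘ TensorProduct.lid k H) h
  simpa [hg.counit_eq_one] using h'

theorem mul_comul2_pow_sub_mem_relSub3 {g : H} {x : (H ⊗[k] H) ⊗[k] H}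
    (hg : IsGroupLikeElem k g) (hx : Commute x ((g ⊗ₜ[k] g) ⊗ₜ[k] g)) (n : ℕ) :
    x * comul2 (k := k) (g ^ n) - x ∈ relSub3 (k := k) (H := H) := by
  have hcomm : Commute x (comul2 (k := k) (g ^ n)) := by
    rw [comul2_eq_of_isGroupLikeElem hg.pow, ← Algebra.TensorProduct.tmul_pow,
      ← Algebra.TensorProduct.tmul_pow]
    exact hx.pow_right n
  have h := comul2_mul_sub_counit_smul_mem_relSub3 (g ^ n) x
  rwa [hg.pow.counit_eq_one, one_smul, ← hcomm.eq] at h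

theorem commute_one_tmul_tmul_of_skewCommute {c d : k} {g a b : H} (hcd : c * d = 1)
    (ha : SkewCommute c g a) (hb : SkewCommute d g b) :
    Commute ((1 ⊗ₜ[k] a) ⊗ₜ[k] b) ((g ⊗ₜ[k] g) ⊗ₜ[k] g) := by
  rw [SkewCommute] at ha hb
  simp only [Commute, SemiconjBy, Algebra.TensorProduct.tmul_mul_tmul, one_mul, mul_one, ha, hb,
    smul_tmul, tmul_smul, smul_smul, mul_comm d, hcd, one_smul]

noncomputable def cocycleRep (a b g : H) (w : k) : (H ⊗[k] H) ⊗[k] H :=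
  (1 ⊗ₜ[k] a) ⊗ₜ[k] (b * g) - (1 ⊗ₜ[k] b) ⊗ₜ[k] (g * a) - w • (1 ⊗ₜ[k] 1) ⊗ₜ[k] (g * g)

theorem commute_cocycleRep {c d w : k} {a b g h : H} (hcd : c * d = 1)
    (ha : SkewCommute c h a) (hb : SkewCommute d h b) (hg : Commute h g) :
    Commute (cocycleRep a b g w) ((h ⊗ₜ[k] h) ⊗ₜ[k] h) := by
  have hg' : SkewCommute (1 : k) h g := hg.skewCommute
  have h1 : SkewCommute (1 : k) h 1 := (Commute.one_right h).skewCommute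
  refine ((commute_one_tmul_tmul_of_skewCommute ?_ ha (hb.mul_right hg')).sub_left
    (commute_one_tmul_tmul_of_skewCommute ?_ hb (hg'.mul_right ha))).sub_left
    ((commute_one_tmul_tmul_of_skewCommute ?_ h1 (hg'.mul_right hg')).smul_left w)
  · linear_combination hcd
  · linear_combination hcd
  · ring

theorem cocycleRep_mul_comul2_pow_sub_mem_relSub3 {c d w : k} {a b g h : H} (hcd : c * d = 1)
    (hh : IsGroupLikeElem k h) (ha : SkewCommute c h a) (hb : SkewCommute d h b)
    (hg : Commute h g) (n : ℕ) :
    cocycleRep a b g w * comul2 (k := k) (h ^ n) - cocycleRep a b g w ∈ relSub3 (k := k) (H := H) :=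
  mul_comul2_pow_sub_mem_relSub3 hh (commute_cocycleRep hcd ha hb hg) n

noncomputable def coboundary2 (σinv : H) (x : (H ⊗[k] H) ⊗[k] H) :
    ((H ⊗[k] H) ⊗[k] H) ⊗[k] H :=
  face0 x - face1 x + face2 x -
    LinearMap.lTensor ((H ⊗[k] H) ⊗[k] H) (LinearMap.mulRight k σinv) (face3 σinv x)

theorem coboundary2_sub_sub_smul (σinv : H) (x y z : (H ⊗[k] H) ⊗[k] H) (w : k) :
    coboundary2 σinv (x - y - w • z) =
      coboundary2 σinv x - coboundary2 σinv y - w • coboundary2 σinv z := by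
  simp only [coboundary2, map_sub, map_smul, smul_sub, smul_add]
  abel

theorem coboundary2_one_tmul_tmul {s a b : H} (ha : comul (R := k) a = a ⊗ₜ s + 1 ⊗ₜ a)
    (hb : comul (R := k) b = b ⊗ₜ (s * s) + s ⊗ₜ b) :
    coboundary2 s ((1 ⊗ₜ[k] a) ⊗ₜ[k] b) = 0 := by
  simp only [coboundary2, face0, face1, face2, face3, LinearMap.coe_comp,
    Function.comp_apply, LinearEquiv.coe_coe, LinearMap.rTensor_tmul, LinearMap.lTensor_tmul,
    TensorProduct.assoc_tmul, TensorProduct.assoc_symm_tmul, TensorProduct.comm_tmul,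
    LinearMap.mulLeft_apply, LinearMap.mulRight_apply, Bialgebra.comul_one,
    Algebra.TensorProduct.one_def, ha, hb, tmul_add, add_tmul, map_add, mul_one]
  abel

theorem coboundary2_one_tmul_one_tmul {s : H} (hs : IsGroupLikeElem k s) :
    coboundary2 s ((1 ⊗ₜ[k] 1) ⊗ₜ[k] (s * s)) = 0 := by
  simp only [coboundary2, face0, face1, face2, face3, LinearMap.coe_comp,
    Function.comp_apply, LinearEquiv.coe_coe, LinearMap.rTensor_tmul, LinearMap.lTensor_tmul,
    TensorProduct.assoc_tmul, TensorProduct.assoc_symm_tmul, TensorProduct.comm_tmul,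
    LinearMap.mulLeft_apply, LinearMap.mulRight_apply, Bialgebra.comul_one,
    Algebra.TensorProduct.one_def, (hs.mul hs).comul_eq_tmul_self, mul_one]
  abel

theorem coboundary2_cocycleRep {a b g : H} (w : k) (hg : IsGroupLikeElem k g)
    (ha : comul (R := k) a = a ⊗ₜ g + 1 ⊗ₜ a) (hb : comul (R := k) b = b ⊗ₜ g + 1 ⊗ₜ b) :
    coboundary2 g (cocycleRep a b g w) = 0 := by
  have hbg := comul_mul_eq_of_isGroupLikeElem_right hg hb
  have hga := comul_mul_eq_of_isGroupLikeElem_left hg ha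
  rw [one_mul] at hbg
  rw [mul_one] at hga
  rw [cocycleRep, coboundary2_sub_sub_smul, coboundary2_one_tmul_tmul ha hbg,
    coboundary2_one_tmul_tmul hb hga, coboundary2_one_tmul_one_tmul hg, smul_zero, sub_self,
    sub_self]

theorem cyc2_cocycleRep_sub_mem_relSub3 {a b g : H} {r r' w : k} (hg : IsGroupLikeElem k g)
    (ha : comul (R := k) a = a ⊗ₜ g + 1 ⊗ₜ a) (hb : comul (R := k) b = b ⊗ₜ g + 1 ⊗ₜ b)
    (hrr' : r * r' = 1) (hga : SkewCommute r g a) (hgb : SkewCommute r' g b)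
    (hab : r • (a * b) - b * a = w • (1 - g * g)) :
    LinearMap.lTensor (H ⊗[k] H) (LinearMap.mulRight k g) (cyc2 g (cocycleRep a b g w)) -
      cocycleRep a b g w ∈ relSub3 (k := k) (H := H) := by
  have key : LinearMap.lTensor (H ⊗[k] H) (LinearMap.mulRight k g) (cyc2 g (cocycleRep a b g w)) -
      cocycleRep a b g w =
      r • (comul2 (k := k) a * ((1 ⊗ₜ[k] b) ⊗ₜ[k] g) -
          counit (R := k) a • ((1 ⊗ₜ[k] b) ⊗ₜ[k] g)) -
        (comul2 (k := k) b * ((1 ⊗ₜ[k] a) ⊗ₜ[k] g) -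
          counit (R := k) b • ((1 ⊗ₜ[k] a) ⊗ₜ[k] g)) := by
    have hba : b * a = r • (a * b) - w • (1 - g * g) := by rw [← hab]; abel
    rw [SkewCommute] at hga hgb
    rw [counit_eq_zero_of_comul_eq hg ha, counit_eq_zero_of_comul_eq hg hb,
      comul2_eq_of_comul_eq ha, comul2_eq_of_comul_eq hb]
    simp only [cocycleRep, cyc2, map_sub, map_smul, LinearMap.coe_comp, Function.comp_apply,
      LinearEquiv.coe_coe, TensorProduct.assoc_tmul, TensorProduct.comm_tmul,
      LinearMap.lTensor_tmul, LinearMap.mulLeft_apply, LinearMap.mulRight_apply, mul_one,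
      one_mul, zero_smul, sub_zero, add_mul, Algebra.TensorProduct.tmul_mul_tmul, hga, hgb, hba,
      tmul_sub, sub_tmul, tmul_smul, ← smul_tmul', smul_sub, smul_add, smul_smul, hrr', one_smul]
    module
  rw [key]
  exact sub_mem (Submodule.smul_mem _ _ (comul2_mul_sub_counit_smul_mem_relSub3 _ _))
    (comul2_mul_sub_counit_smul_mem_relSub3 _ _)

end Bialgebra

section UqSu2

variable {k H : Type*} [Field k] [Ring H] [Algebra k H] {q : k} {E F K K' : H}

theorem skewCommute_K_F (hq : q ≠ 0) (hFK : F * K = q • (K * F)) : SkewCommute q⁻¹ K F := by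
  rw [SkewCommute, hFK, smul_smul, inv_mul_cancel₀ hq, one_smul]

theorem skewCommute_K_KF (hq : q ≠ 0) (hFK : F * K = q • (K * F)) :
    SkewCommute q⁻¹ K (K * F) := by
  simpa using (Commute.refl K).skewCommute.mul_right (skewCommute_K_F hq hFK)

theorem skewCommute_K_EK (hKE : K * E = q • (E * K)) : SkewCommute q K (E * K) := by
  simpa using (show SkewCommute q K E from hKE).mul_right (Commute.refl K).skewCommute

theorem twisted_commutator_KF_EK (hq : q ≠ 0) (hK'K : K' * K = 1) (hKE : K * E = q • (E * K))
    (hFK : F * K = q • (K * F)) (hEF : E * F - F * E = (q - q⁻¹)⁻¹ • (K * K - K' * K')) :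
    (q⁻¹ * q⁻¹) • ((K * F) * (E * K)) - (E * K) * (K * F) =
      (q ^ 3 - q)⁻¹ • (1 - K * K * (K * K)) := by
  have hKF := skewCommute_K_F hq hFK
  have hKFE : SkewCommute (q⁻¹ * q) K (F * E) := hKF.mul_right hKE
  have hKKF : SkewCommute (q⁻¹ * q⁻¹) (K * K) F := hKF.mul_left hKF
  rw [SkewCommute, inv_mul_cancel₀ hq, one_smul] at hKFE
  rw [SkewCommute] at hKKF
  have hKFEK : (K * F) * (E * K) = (F * E) * (K * K) := by
    rw [mul_assoc, ← mul_assoc F, ← mul_assoc, hKFE, mul_assoc]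
  have hEKKF : (E * K) * (K * F) = (q⁻¹ * q⁻¹) • ((E * F) * (K * K)) := by
    rw [mul_assoc, ← mul_assoc K, hKKF, mul_smul_comm, ← mul_assoc, mul_assoc E]
  have hK'K'KK : K' * K' * (K * K) = 1 := by
    rw [mul_assoc, ← mul_assoc K' K, hK'K, one_mul, hK'K]
  have hscalar : (q ^ 3 - q)⁻¹ = q⁻¹ * q⁻¹ * (q - q⁻¹)⁻¹ := by
    rw [← mul_inv, ← mul_inv]; congr 1; field_simp
  rw [hKFEK, hEKKF, ← smul_sub, ← sub_mul, ← neg_sub, hEF, hscalar, neg_mul, smul_mul_assoc,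
    sub_mul, hK'K'KK]
  module

end UqSu2

theorem stmt9_equivariant_index_cocycle_for_Uq_su2_general
    (k : Type*) [Field k] (q : k) (hq : q ≠ 0)
    -- the Hopf algebra `H = U_q(su₂)`
    (H : Type*) [Ring H] [HopfAlgebra k H]
    (E F K K' : H)
    (hKK' : K * K' = 1) (hK'K : K' * K = 1)
    (hKE : K * E = q • (E * K))
    (hFK : F * K = q • (K * F))
    (hEF : E * F - F * E = (q - q⁻¹)⁻¹ • (K * K - K' * K'))
    (hΔK : comul (R := k) K = K ⊗ₜ[k] K)
    (hΔE : comul (R := k) E = E ⊗ₜ[k] K + K' ⊗ₜ[k] E)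
    (hΔF : comul (R := k) F = F ⊗ₜ[k] K + K' ⊗ₜ[k] F)
    (hεK : counit (R := k) K = 1) :
    -- the representative of
    -- `F = [1⊗KF⊗EK³] − [1⊗EK⊗K³F] − (q³−q)⁻¹[1⊗1⊗K⁴] ∈ M²`
    (let Frep : (H ⊗[k] H) ⊗[k] H :=
       (1 ⊗ₜ[k] (K * F)) ⊗ₜ[k] (E * (K * K * K))
         - (1 ⊗ₜ[k] (E * K)) ⊗ₜ[k] ((K * K * K) * F)
         - (q ^ 3 - q)⁻¹ • ((1 ⊗ₜ[k] (1 : H)) ⊗ₜ[k] (K * K * K * K));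
     -- (i)  `F · K^{2m} = F` in `M²` for every `m ∈ ℤ` (`𝒦`-equivariance)
     (∀ m : ℕ,
        Frep * comul2 (K ^ (2 * m)) - Frep ∈ relSub3 (k := k) (H := H) ∧
        Frep * comul2 (K' ^ (2 * m)) - Frep ∈ relSub3 (k := k) (H := H)) ∧
     -- (ii)  `∂₀F − ∂₁F + ∂₂F − (∂₃F) ◁ K² = 0` in `M³`
     (face0 Frep - face1 Frep + face2 Frep
         - (LinearMap.lTensor ((H ⊗[k] H) ⊗[k] H) (LinearMap.mulRight k (K * K)))
             (face3 (K * K) Frep)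
       ∈ relSub4 (k := k) (H := H)) ∧
     -- (iii)  `(τ₂ F) ◁ K² = F` in `M²`
     ((LinearMap.lTensor (H ⊗[k] H) (LinearMap.mulRight k (K * K)))
         (cyc2 (K * K) Frep) - Frep
       ∈ relSub3 (k := k) (H := H))) := by
  have hK : IsGroupLikeElem k K := ⟨hεK, hΔK⟩
  have hK' : IsGroupLikeElem k K' := hK.of_mul_eq_one hKK' hK'K
  have hKa := skewCommute_K_KF hq hFK
  have hKb := skewCommute_K_EK hKE
  have hK'a := hKa.of_mul_eq_one hKK' hK'K (inv_mul_cancel₀ hq)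
  have hK'b := hKb.of_mul_eq_one hKK' hK'K (mul_inv_cancel₀ hq)
  have hqq : q⁻¹ * q⁻¹ * (q * q) = 1 := by field_simp
  have hK'K_comm : Commute K' K := hK'K.trans hKK'.symm
  have hΔa : comul (R := k) (K * F) = (K * F) ⊗ₜ (K * K) + 1 ⊗ₜ (K * F) := by
    simpa [hKK'] using comul_mul_eq_of_isGroupLikeElem_left hK hΔF
  have hΔb : comul (R := k) (E * K) = (E * K) ⊗ₜ (K * K) + 1 ⊗ₜ (E * K) := by
    simpa [hK'K] using comul_mul_eq_of_isGroupLikeElem_right hK hΔE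
  intro Frep
  have hFrep : Frep = cocycleRep (K * F) (E * K) (K * K) (q ^ 3 - q)⁻¹ := by
    simp only [Frep, cocycleRep, mul_assoc]
  rw [hFrep]
  refine ⟨fun m => ⟨?_, ?_⟩, ?_, ?_⟩
  · rw [pow_mul, sq]
    exact cocycleRep_mul_comul2_pow_sub_mem_relSub3 hqq (hK.mul hK) (hKa.mul_left hKa)
      (hKb.mul_left hKb) (Commute.refl _) m
  · rw [pow_mul, sq]
    exact cocycleRep_mul_comul2_pow_sub_mem_relSub3 (by rwa [mul_comm]) (hK'.mul hK')
      (hK'a.mul_left hK'a) (hK'b.mul_left hK'b)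
      ((hK'K_comm.mul_right hK'K_comm).mul_left (hK'K_comm.mul_right hK'K_comm)) m
  · rw [← coboundary2, coboundary2_cocycleRep _ (hK.mul hK) hΔa hΔb]
    exact zero_mem _
  · exact cyc2_cocycleRep_sub_mem_relSub3 (hK.mul hK) hΔa hΔb hqq (hKa.mul_left hKa)
      (hKb.mul_left hKb) (twisted_commutator_KF_EK hq hK'K hKE hFK hEF)

theorem stmt9_equivariant_index_cocycle_for_Uq_su2
    (k : Type*) [Field k] [CharZero k] (q : k) (hq : q ≠ 0) (hq2 : q ^ 2 ≠ 1)
    -- the Hopf algebra `H = U_q(su₂)`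
    (H : Type*) [Ring H] [HopfAlgebra k H]
    (E F K K' : H)
    (hKK' : K * K' = 1) (hK'K : K' * K = 1)
    (hKE : K * E = q • (E * K))
    (hFK : F * K = q • (K * F))
    (hEF : E * F - F * E = (q - q⁻¹)⁻¹ • (K * K - K' * K'))
    (hΔK : comul (R := k) K = K ⊗ₜ[k] K)
    (hΔK' : comul (R := k) K' = K' ⊗ₜ[k] K')
    (hΔE : comul (R := k) E = E ⊗ₜ[k] K + K' ⊗ₜ[k] E)
    (hΔF : comul (R := k) F = F ⊗ₜ[k] K + K' ⊗ₜ[k] F)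
    (hεK : counit (R := k) K = 1) (hεK' : counit (R := k) K' = 1)
    (hεE : counit (R := k) E = 0) (hεF : counit (R := k) F = 0)
    (hSK : antipode (R := k) K = K') (hSK' : antipode (R := k) K' = K)
    (hSE : antipode (R := k) E = -(q • E)) (hSF : antipode (R := k) F = -(q⁻¹ • F)) :
    -- the representative of
    -- `F = [1⊗KF⊗EK³] − [1⊗EK⊗K³F] − (q³−q)⁻¹[1⊗1⊗K⁴] ∈ M²`
    (let Frep : (H ⊗[k] H) ⊗[k] H :=
       (1 ⊗ₜ[k] (K * F)) ⊗ₜ[k] (E * (K * K * K))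
         - (1 ⊗ₜ[k] (E * K)) ⊗ₜ[k] ((K * K * K) * F)
         - (q ^ 3 - q)⁻¹ • ((1 ⊗ₜ[k] (1 : H)) ⊗ₜ[k] (K * K * K * K));
     -- (i)  `F · K^{2m} = F` in `M²` for every `m ∈ ℤ` (`𝒦`-equivariance)
     (∀ m : ℕ,
        Frep * comul2 (K ^ (2 * m)) - Frep ∈ relSub3 (k := k) (H := H) ∧
        Frep * comul2 (K' ^ (2 * m)) - Frep ∈ relSub3 (k := k) (H := H)) ∧
     -- (ii)  `∂₀F − ∂₁F + ∂₂F − (∂₃F) ◁ K² = 0` in `M³`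
     (face0 Frep - face1 Frep + face2 Frep
         - (LinearMap.lTensor ((H ⊗[k] H) ⊗[k] H) (LinearMap.mulRight k (K * K)))
             (face3 (K * K) Frep)
       ∈ relSub4 (k := k) (H := H)) ∧
     -- (iii)  `(τ₂ F) ◁ K² = F` in `M²`
     ((LinearMap.lTensor (H ⊗[k] H) (LinearMap.mulRight k (K * K)))
         (cyc2 (K * K) Frep) - Frep
       ∈ relSub3 (k := k) (H := H))) :=
  stmt9_equivariant_index_cocycle_for_Uq_su2_general k q hq H E F K K' hKK' hK'K hKE hFK hEF hΔK hΔE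
    hΔF hεK
end

section
/- Let O(S_q²) be the k-algebra generated by A, B, C with relations BA = q²AB, AC = q²CA, CB = A − A², BC = q²A − q⁴A², and let θ be the unique algebra automorphism of O(S_q²) with θ(A) = A, θ(B) = q⁻²B, θ(C) = q²C (it exists). Set η′ := q⁴·C⊗A⊗B + q²·B⊗C⊗A + q²·A⊗B⊗C − q²·C⊗B⊗A − q²·A⊗C⊗B − B⊗A⊗C + (q⁶−q²)·A⊗A⊗A ∈ O(S_q²)^⊗3. Then for every k-linear map φ: O(S_q²)⊗O(S_q²) → k, the θ-twisted Hochschild coboundary b_θφ(x,y,z) := φ(xy⊗z) − φ(x⊗yz) + φ(θ(z)x⊗y) satisfies (b_θφ)(η′) = (q⁴ − q²)·φ(A⊗A). In particular, if φ is θ-twisted cyclic, i.e. φ(x⊗y) = −φ(θ(y)⊗x) for all x, y, then (b_θφ)(η′) = 0. -/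
/-!
STATEMENT 11: In the coordinate algebra `O(S_q²)` of the standard Podleś sphere
(generators `A, B, C` with `BA = q²AB`, `AC = q²CA`, `CB = A − A²`, `BC = q²A − q⁴A²`),
with the algebra automorphism `θ` determined by `θ(A)=A`, `θ(B)=q⁻²B`, `θ(C)=q²C`,
the θ-twisted Hochschild coboundary of any linear 1-cochain `φ` evaluates on
`η′ = q⁴·C⊗A⊗B + q²·B⊗C⊗A + q²·A⊗B⊗C − q²·C⊗B⊗A − q²·A⊗C⊗B − B⊗A⊗C + (q⁶−q²)·A⊗A⊗A`
to `(q⁴−q²)·φ(A⊗A)`.  In particular `(b_θφ)(η′) = 0` whenever `φ` is θ-twisted cyclic.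
-/

theorem stmt11_twisted_coboundaries_vanish_on_eta'
    (k : Type*) [Field k] [CharZero k] (q : k) (hq : q ≠ 0) (hq2 : q ^ 2 ≠ 1)
    (O : Type*) [Ring O] [Algebra k O]
    (A B C : O)
    -- relations of the standard Podleś sphere
    (hBA : B * A = (q ^ 2) • (A * B))
    (hAC : A * C = (q ^ 2) • (C * A))
    (hCB : C * B = A - A * A)
    (hBC : B * C = (q ^ 2) • A - (q ^ 4) • (A * A))
    -- the unique algebra automorphism `θ` with `θ(A)=A`, `θ(B)=q⁻²B`, `θ(C)=q²C`
    (θ : O ≃ₐ[k] O)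
    (hθA : θ A = A) (hθB : θ B = (q ^ 2)⁻¹ • B) (hθC : θ C = (q ^ 2) • C) :
    ∀ φ : O →ₗ[k] O →ₗ[k] k,
      -- the θ-twisted Hochschild coboundary of `φ`,
      -- `b_θφ(x,y,z) = φ(xy⊗z) − φ(x⊗yz) + φ(θ(z)x⊗y)`, evaluated on `η′`
      (let bφ : O → O → O → k := fun x y z => φ (x * y) z - φ x (y * z) + φ (θ z * x) y;
        q ^ 4 * bφ C A B + q ^ 2 * bφ B C A + q ^ 2 * bφ A B C
          - q ^ 2 * bφ C B A - q ^ 2 * bφ A C B - bφ B A C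
          + (q ^ 6 - q ^ 2) * bφ A A A
        = (q ^ 4 - q ^ 2) * φ A A)
      ∧
      -- in particular, the coboundary of a θ-twisted cyclic 1-cochain vanishes on `η′`
      ((∀ x y : O, φ x y = - φ (θ y) x) →
        (let bφ : O → O → O → k := fun x y z => φ (x * y) z - φ x (y * z) + φ (θ z * x) y;
          q ^ 4 * bφ C A B + q ^ 2 * bφ B C A + q ^ 2 * bφ A B C
            - q ^ 2 * bφ C B A - q ^ 2 * bφ A C B - bφ B A C
            + (q ^ 6 - q ^ 2) * bφ A A A
          = 0)) := by
  intro φ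
  have hq2' : (q ^ 2 : k) ≠ 0 := pow_ne_zero 2 hq
  have hCA : C * A = (q ^ 2)⁻¹ • (A * C) := by
    rw [hAC, smul_smul, inv_mul_cancel₀ hq2', one_smul]
  have key :
      (let bφ : O → O → O → k := fun x y z => φ (x * y) z - φ x (y * z) + φ (θ z * x) y;
        q ^ 4 * bφ C A B + q ^ 2 * bφ B C A + q ^ 2 * bφ A B C
          - q ^ 2 * bφ C B A - q ^ 2 * bφ A C B - bφ B A C
          + (q ^ 6 - q ^ 2) * bφ A A A
        = (q ^ 4 - q ^ 2) * φ A A) := by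
    simp only [hθA, hθB, hθC, smul_mul_assoc, hCA, hBA, hCB, hBC, map_smul, map_sub,
      LinearMap.smul_apply, LinearMap.sub_apply, smul_eq_mul]
    field_simp
    ring
  refine ⟨key, fun hcyc => ?_⟩
  have hA : φ A A = 0 := by
    have h := hcyc A A
    rw [hθA] at h
    linear_combination h / 2
  simp only [key, hA, mul_zero]
end
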